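/- For the 2π-periodic function g(θ) = |cos θ| cos θ - i|sin θ| sin θ, the Fourier coefficients g_n = (1/2π) ∫₀^{2π} g(θ) e^{-inθ} dθ satisfy: g_n = 8/(π(n-2)n(n+2)) when n ≡ 3 (mod 4), and g_n = 0 otherwise. In particular g_1 = 0. -/

import Mathlib

open Complex Real intervalIntegral

noncomputable def ff (n : ℤ) (θ : ℝ) : ℂ :=
  ((|Real.cos θ| * Real.cos θ : ℝ) : ℂ) * Complex.exp (-(n : ℂ) * Complex.I * θ)

lemma ff_cont (n : ℤ) : Continuous (ff n) := by
  unfold ff; fun_prop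

lemma expI_half (m : ℤ) : Complex.exp (Complex.I * m * ((π/2 : ℝ) : ℂ)) = Complex.I ^ m := by
  have h : (Complex.I * m * ((π/2 : ℝ) : ℂ)) = (m : ℂ) * (((π/2 : ℝ) : ℂ) * Complex.I) := by
    push_cast; ring
  rw [h, Complex.exp_int_mul, Complex.exp_mul_I]
  norm_num [← Complex.ofReal_cos, ← Complex.ofReal_sin, Real.cos_pi_div_two, Real.sin_pi_div_two]

lemma expI_pi (m : ℤ) : Complex.exp (Complex.I * m * (π:ℝ)) = (-1) ^ m := by
  have h : (Complex.I * m * (π:ℝ)) = (m : ℂ) * (((π : ℝ) : ℂ) * Complex.I) := by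
    push_cast; ring
  rw [h, Complex.exp_int_mul, Complex.exp_mul_I]
  norm_num [← Complex.ofReal_cos, ← Complex.ofReal_sin]

lemma ff_step (n : ℤ) (θ : ℝ) :
    ff n (θ + π) = -((-1:ℂ) ^ (-n)) * ff n θ := by
  unfold ff
  have h1 : Real.cos (θ + π) = -Real.cos θ := Real.cos_add_pi θ
  have h2 : Complex.exp (-(n:ℂ) * Complex.I * (θ + π)) =
      Complex.exp (-(n:ℂ) * Complex.I * θ) * (-1:ℂ) ^ (-n) := by
    rw [← expI_pi (-n), ← Complex.exp_add]
    push_cast; ring_nf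
  rw [h1]
  push_cast [abs_neg]
  rw [h2]
  ring

lemma ff_per (n : ℤ) : Function.Periodic (ff n) (2 * π) := by
  intro θ
  have h := ff_step n (θ + π)
  rw [ff_step n θ] at h
  have : θ + 2 * π = θ + π + π := by ring
  rw [this, h]
  have h1 : (-1:ℂ) ^ (-n) * (-1:ℂ) ^ (-n) = 1 := by
    rw [← zpow_add₀ (by norm_num : (-1:ℂ) ≠ 0)]
    have : -n + -n = 2 * (-n) := by ring
    rw [this, zpow_mul]; norm_num
  linear_combination (ff n θ) * h1

lemma A_even (n : ℤ) (hn : n % 2 = 0) : ∫ θ in (0:ℝ)..(2*π), ff n θ = 0 := by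
  obtain ⟨m, hm⟩ : ∃ m, n = 2 * m := ⟨n / 2, by omega⟩
  have hsgn : (-1:ℂ) ^ (-n) = 1 := by
    rw [hm]
    have : -(2 * m) = 2 * (-m) := by ring
    rw [this, zpow_mul]; norm_num
  have hstep : ∀ θ : ℝ, ff n (θ + π) = -ff n θ := by
    intro θ; rw [ff_step, hsgn]; ring
  have hint : ∀ a b : ℝ, IntervalIntegrable (ff n) MeasureTheory.volume a b :=
    fun a b => (ff_cont n).intervalIntegrable a b
  have hsplit : (∫ θ in (0:ℝ)..π, ff n θ) + (∫ θ in π..(2*π), ff n θ)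
      = ∫ θ in (0:ℝ)..(2*π), ff n θ :=
    intervalIntegral.integral_add_adjacent_intervals (hint 0 π) (hint π (2*π))
  have h2 : (∫ θ in π..(2*π), ff n θ) = ∫ θ in (0:ℝ)..π, ff n (θ + π) := by
    rw [intervalIntegral.integral_comp_add_right (ff n) π]
    norm_num [two_mul]
  rw [← hsplit, h2]
  simp only [hstep]
  rw [intervalIntegral.integral_neg]
  ring

lemma B_shift (n : ℤ) :
    (∫ θ in (0:ℝ)..(2*π), ((|Real.sin θ| * Real.sin θ : ℝ) : ℂ)
        * Complex.exp (-(n : ℂ) * Complex.I * θ))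
      = Complex.exp (Complex.I * (-n : ℤ) * ((π:ℝ)/2)) * ∫ θ in (0:ℝ)..(2*π), ff n θ := by
  have key : ∀ θ : ℝ, ((|Real.sin θ| * Real.sin θ : ℝ) : ℂ)
        * Complex.exp (-(n : ℂ) * Complex.I * θ)
      = Complex.exp (Complex.I * (-n : ℤ) * ((π:ℝ)/2)) * ff n (θ - π/2) := by
    intro θ
    unfold ff
    have h1 : Real.cos (θ - π/2) = Real.sin θ := Real.cos_sub_pi_div_two θ
    rw [h1]
    rw [show Complex.exp (-(n:ℂ) * Complex.I * ((θ:ℝ) - π/2 : ℝ))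
        = Complex.exp (-(n:ℂ) * Complex.I * θ) * Complex.exp (Complex.I * ((-n:ℤ):ℂ) * (-((π:ℝ)/2))) by
      rw [← Complex.exp_add]; push_cast; ring_nf]
    rw [show Complex.I * ((-n:ℤ):ℂ) * (-((π:ℝ)/2)) = Complex.I * ((n:ℤ):ℂ) * (((π:ℝ))/2) by push_cast; ring]
    rw [show (Complex.I * ((-n:ℤ):ℂ) * (((π:ℝ))/2)) = -(Complex.I * ((n:ℤ):ℂ) * (((π:ℝ))/2)) by push_cast; ring]
    rw [Complex.exp_neg]
    have hne : Complex.exp (Complex.I * ((n:ℤ):ℂ) * (((π:ℝ))/2)) ≠ 0 := Complex.exp_ne_zero _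
    field_simp
  simp only [key]
  rw [intervalIntegral.integral_const_mul]
  congr 1
  have h2 : (∫ θ in (0:ℝ)..(2*π), ff n (θ - π/2)) = ∫ θ in (0 - π/2)..(2*π - π/2), ff n θ := by
    exact intervalIntegral.integral_comp_sub_right (ff n) (π/2)
  rw [h2]
  have := (ff_per n).intervalIntegral_add_eq (0 - π/2) 0
  rw [show (0:ℝ) - π/2 = -(π/2) by ring, show 2*π - π/2 = -(π/2) + 2*π by ring]
  simpa using this

lemma Ired (k r : ℤ) : Complex.I ^ (4*k + r) = Complex.I ^ r := by
  rw [zpow_add₀ Complex.I_ne_zero, zpow_mul]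
  norm_num [show Complex.I ^ (4:ℤ) = 1 by
    rw [show (4:ℤ) = ((4:ℕ):ℤ) by norm_num, zpow_natCast]
    simp [pow_succ, Complex.I_mul_I]]

lemma A_mod3 (n k : ℤ) (hn : n = 4*k + 3) :
    ∫ θ in (0:ℝ)..(2*π), ff n θ = 8 / (((n:ℂ) - 2) * (n:ℂ) * ((n:ℂ) + 2)) := by
  -- periodicity with period π
  have hsgn : (-1:ℂ) ^ (-n) = -1 := by
    have h : -n = 2 * (-2*k - 2) + 1 := by omega
    rw [h, zpow_add₀ (by norm_num : (-1:ℂ) ≠ 0), zpow_mul]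
    norm_num
  have hper : Function.Periodic (ff n) π := by
    intro θ; rw [ff_step, hsgn]; ring
  have h01 := hper.intervalIntegral_add_eq 0 (-(π/2))
  have h12 := hper.intervalIntegral_add_eq π (-(π/2))
  have hsplit : (∫ θ in (0:ℝ)..π, ff n θ) + (∫ θ in π..(2*π), ff n θ)
      = ∫ θ in (0:ℝ)..(2*π), ff n θ :=
    intervalIntegral.integral_add_adjacent_intervals
      ((ff_cont n).intervalIntegrable 0 π) ((ff_cont n).intervalIntegrable π (2*π))
  rw [zero_add] at h01
  rw [show π + π = 2*π by ring] at h12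
  rw [show -(π/2) + π = π/2 by ring] at h01 h12
  have hA : (∫ θ in (0:ℝ)..(2*π), ff n θ) = 2 * ∫ θ in (-(π/2))..(π/2), ff n θ := by
    rw [← hsplit, h01, h12]; ring
  -- rewrite integrand on [-π/2, π/2]
  have hcongr : (∫ θ in (-(π/2))..(π/2), ff n θ)
      = ∫ θ in (-(π/2))..(π/2),
          ((1:ℂ)/2) * Complex.exp (Complex.I * ((-n:ℤ):ℂ) * θ)
          + ((1:ℂ)/4) * Complex.exp (Complex.I * ((2-n:ℤ):ℂ) * θ)
          + ((1:ℂ)/4) * Complex.exp (Complex.I * ((-2-n:ℤ):ℂ) * θ) := by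
    apply intervalIntegral.integral_congr
    intro θ hθ
    rw [Set.uIcc_of_le (by linarith [Real.pi_pos] : -(π/2) ≤ π/2)] at hθ
    have hcos : 0 ≤ Real.cos θ := Real.cos_nonneg_of_mem_Icc hθ
    unfold ff
    rw [_root_.abs_of_nonneg hcos]
    show _ = _ + _ + _
    set u := Complex.exp (Complex.I * θ) with hu
    set v := Complex.exp (-(Complex.I * θ)) with hv
    set w := Complex.exp (-(n:ℂ) * Complex.I * θ) with hw
    have huv : u * v = 1 := by rw [hu, hv, ← Complex.exp_add]; simp
    have hc : Complex.cos (θ:ℂ) = (u + v) / 2 := by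
      rw [hu, hv, Complex.cos]
      congr 2 <;> ring
    have h1 : Complex.exp (Complex.I * ((-n:ℤ):ℂ) * θ) = w := by
      rw [hw]; congr 1; push_cast; ring
    have h2 : Complex.exp (Complex.I * ((2-n:ℤ):ℂ) * θ) = u * u * w := by
      rw [hu, hw, ← Complex.exp_add, ← Complex.exp_add]; congr 1; push_cast; ring
    have h3 : Complex.exp (Complex.I * ((-2-n:ℤ):ℂ) * θ) = v * v * w := by
      rw [hv, hw, ← Complex.exp_add, ← Complex.exp_add]; congr 1; push_cast; ring
    rw [h1, h2, h3]
    push_cast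
    rw [hc]
    linear_combination (w/2) * huv
  have hm : ∀ m : ℤ, m ≠ 0 → (∫ θ in (-(π/2))..(π/2), Complex.exp (Complex.I * ((m:ℤ):ℂ) * θ))
      = (Complex.I ^ m - Complex.I ^ (-m)) / (Complex.I * ((m:ℤ):ℂ)) := by
    intro m hm0
    have hcne : Complex.I * ((m:ℤ):ℂ) ≠ 0 :=
      mul_ne_zero Complex.I_ne_zero (Int.cast_ne_zero.mpr hm0)
    rw [integral_exp_mul_complex hcne]
    congr 1
    rw [expI_half m]
    congr 1
    rw [show Complex.I * ((m:ℤ):ℂ) * ((-(π/2):ℝ):ℂ) = Complex.I * ((-m:ℤ):ℂ) * ((π/2 : ℝ):ℂ) by push_cast; ring]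
    rw [expI_half (-m)]
  have hint : ∀ m : ℤ, IntervalIntegrable
      (fun θ : ℝ => Complex.exp (Complex.I * ((m:ℤ):ℂ) * θ)) MeasureTheory.volume (-(π/2)) (π/2) := by
    intro m
    apply Continuous.intervalIntegrable
    fun_prop
  rw [hA, hcongr]
  rw [intervalIntegral.integral_add (((hint (-n)).const_mul _).add ((hint (2-n)).const_mul _))
      ((hint (-2-n)).const_mul _),
    intervalIntegral.integral_add ((hint (-n)).const_mul _) ((hint (2-n)).const_mul _),
    intervalIntegral.integral_const_mul, intervalIntegral.integral_const_mul,
    intervalIntegral.integral_const_mul,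
    hm (-n) (by omega), hm (2-n) (by omega), hm (-2-n) (by omega)]
  have v1 : Complex.I ^ (-n) = Complex.I := by
    rw [show -n = 4*(-k-1)+1 by omega, Ired]; simp
  have v1' : Complex.I ^ (-(-n)) = -Complex.I := by
    rw [show -(-n) = 4*k+3 by omega, Ired]
    rw [show (3:ℤ) = ((3:ℕ):ℤ) by norm_num, zpow_natCast]
    simp [pow_succ, Complex.I_mul_I]
  have v2 : Complex.I ^ (2-n) = -Complex.I := by
    rw [show 2-n = 4*(-k-1)+3 by omega, Ired]
    rw [show (3:ℤ) = ((3:ℕ):ℤ) by norm_num, zpow_natCast]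
    simp [pow_succ, Complex.I_mul_I]
  have v2' : Complex.I ^ (-(2-n)) = Complex.I := by
    rw [show -(2-n) = 4*k+1 by omega, Ired]; simp
  have v3 : Complex.I ^ (-2-n) = -Complex.I := by
    rw [show -2-n = 4*(-k-2)+3 by omega, Ired]
    rw [show (3:ℤ) = ((3:ℕ):ℤ) by norm_num, zpow_natCast]
    simp [pow_succ, Complex.I_mul_I]
  have v3' : Complex.I ^ (-(-2-n)) = Complex.I := by
    rw [show -(-2-n) = 4*(k+1)+1 by omega, Ired]; simp
  rw [v1, v1', v2, v2', v3, v3']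
  have key1 : ∀ c : ℂ, c ≠ 0 → (Complex.I - -Complex.I)/(Complex.I * c) = 2 / c := by
    intro c hc
    rw [div_eq_div_iff (mul_ne_zero Complex.I_ne_zero hc) hc]; ring
  have key2 : ∀ c : ℂ, c ≠ 0 → (-Complex.I - Complex.I)/(Complex.I * c) = -2 / c := by
    intro c hc
    rw [div_eq_div_iff (mul_ne_zero Complex.I_ne_zero hc) hc]; ring
  have c1 : ((-n:ℤ):ℂ) ≠ 0 := Int.cast_ne_zero.mpr (by omega)
  have c2 : ((2-n:ℤ):ℂ) ≠ 0 := Int.cast_ne_zero.mpr (by omega)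
  have c3 : ((-2-n:ℤ):ℂ) ≠ 0 := Int.cast_ne_zero.mpr (by omega)
  rw [key1 _ c1, key2 _ c2, key2 _ c3]
  have d1 : ((n:ℤ):ℂ) ≠ 0 := Int.cast_ne_zero.mpr (by omega)
  have d2 : ((n:ℤ):ℂ) - 2 ≠ 0 := by
    intro h
    have : ((n:ℤ):ℂ) = ((2:ℤ):ℂ) := by push_cast; linear_combination h
    exact absurd (Int.cast_injective this) (by omega)
  have d3 : ((n:ℤ):ℂ) + 2 ≠ 0 := by
    intro h
    have : ((n:ℤ):ℂ) = ((-2:ℤ):ℂ) := by push_cast; linear_combination h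
    exact absurd (Int.cast_injective this) (by omega)
  push_cast at c1 c2 c3 d1 d2 d3 ⊢
  field_simp
  ring

lemma main_split (n : ℤ) :
    (∫ θ in (0:ℝ)..(2 * π),
        (((|Real.cos θ| * Real.cos θ : ℝ) : ℂ) - Complex.I * ((|Real.sin θ| * Real.sin θ : ℝ) : ℂ))
          * Complex.exp (-(n : ℂ) * Complex.I * θ))
      = (1 - Complex.I * Complex.I ^ (-n)) * ∫ θ in (0:ℝ)..(2*π), ff n θ := by
  have hi1 : IntervalIntegrable (ff n) MeasureTheory.volume 0 (2*π) :=
    (ff_cont n).intervalIntegrable 0 (2*π)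
  have hi2 : IntervalIntegrable
      (fun θ : ℝ => Complex.I * (((|Real.sin θ| * Real.sin θ : ℝ) : ℂ)
        * Complex.exp (-(n:ℂ) * Complex.I * θ))) MeasureTheory.volume 0 (2*π) := by
    apply Continuous.intervalIntegrable; fun_prop
  have hcg : (∫ θ in (0:ℝ)..(2 * π),
        (((|Real.cos θ| * Real.cos θ : ℝ) : ℂ) - Complex.I * ((|Real.sin θ| * Real.sin θ : ℝ) : ℂ))
          * Complex.exp (-(n : ℂ) * Complex.I * θ))
      = ∫ θ in (0:ℝ)..(2 * π), (ff n θ - Complex.I * (((|Real.sin θ| * Real.sin θ : ℝ) : ℂ)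
          * Complex.exp (-(n:ℂ) * Complex.I * θ))) := by
    apply intervalIntegral.integral_congr
    intro θ _
    unfold ff; ring
  rw [hcg, intervalIntegral.integral_sub hi1 hi2, intervalIntegral.integral_const_mul, B_shift,
    show Complex.I * ((-n:ℤ):ℂ) * (((π:ℝ):ℂ)/2) = Complex.I * ((-n:ℤ):ℂ) * ((π/2:ℝ):ℂ) by push_cast; ring,
    expI_half (-n)]
  ring

/-- Fourier coefficients of `g(θ) = |cos θ| cos θ - i |sin θ| sin θ`:
`g_n = 8/(π(n-2)n(n+2))` when `n ≡ 3 (mod 4)` and `g_n = 0` otherwise;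
in particular `g_1 = 0`. -/
theorem stmt4 :
    (∀ n : ℤ,
      (1 / (2 * (Real.pi : ℂ))) *
          ∫ θ in (0:ℝ)..(2 * Real.pi),
            (((|Real.cos θ| * Real.cos θ : ℝ) : ℂ)
                - Complex.I * ((|Real.sin θ| * Real.sin θ : ℝ) : ℂ))
              * Complex.exp (-(n : ℂ) * Complex.I * θ) =
        if n % 4 = 3 then
          ((8 / (Real.pi * ((n : ℝ) - 2) * (n : ℝ) * ((n : ℝ) + 2)) : ℝ) : ℂ)
        else 0) ∧
    (1 / (2 * (Real.pi : ℂ))) *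
        ∫ θ in (0:ℝ)..(2 * Real.pi),
          (((|Real.cos θ| * Real.cos θ : ℝ) : ℂ)
              - Complex.I * ((|Real.sin θ| * Real.sin θ : ℝ) : ℂ))
            * Complex.exp (-(1 : ℂ) * Complex.I * θ) = 0 := by
  have main : ∀ n : ℤ,
      (1 / (2 * (Real.pi : ℂ))) *
          ∫ θ in (0:ℝ)..(2 * Real.pi),
            (((|Real.cos θ| * Real.cos θ : ℝ) : ℂ)
                - Complex.I * ((|Real.sin θ| * Real.sin θ : ℝ) : ℂ))
              * Complex.exp (-(n : ℂ) * Complex.I * θ) =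
        if n % 4 = 3 then
          ((8 / (Real.pi * ((n : ℝ) - 2) * (n : ℝ) * ((n : ℝ) + 2)) : ℝ) : ℂ)
        else 0 := by
    intro n
    rw [main_split n]
    by_cases h3 : n % 4 = 3
    · rw [if_pos h3]
      rw [A_mod3 n (n/4) (by omega)]
      have v1 : Complex.I ^ (-n) = Complex.I := by
        rw [show -n = 4*(-(n/4)-1)+1 by omega, Ired]; simp
      rw [v1, Complex.I_mul_I]
      have d1 : ((n:ℤ):ℂ) ≠ 0 := Int.cast_ne_zero.mpr (by omega)
      have d2 : ((n:ℤ):ℂ) - 2 ≠ 0 := by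
        intro h
        have : ((n:ℤ):ℂ) = ((2:ℤ):ℂ) := by push_cast; linear_combination h
        exact absurd (Int.cast_injective this) (by omega)
      have d3 : ((n:ℤ):ℂ) + 2 ≠ 0 := by
        intro h
        have : ((n:ℤ):ℂ) = ((-2:ℤ):ℂ) := by push_cast; linear_combination h
        exact absurd (Int.cast_injective this) (by omega)
      have dp : ((π:ℝ):ℂ) ≠ 0 := Complex.ofReal_ne_zero.mpr Real.pi_ne_zero
      have dr1 : ((n:ℝ):ℂ) = ((n:ℤ):ℂ) := by push_cast; ring
      push_cast
      field_simp
      ring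
    · rw [if_neg h3]
      rcases (by omega : n % 2 = 0 ∨ n % 4 = 1) with he | h1
      · rw [A_even n he]; ring
      · have v1 : Complex.I ^ (-n) = -Complex.I := by
          rw [show -n = 4*(-(n/4)-1)+3 by omega, Ired,
            show (3:ℤ) = ((3:ℕ):ℤ) by norm_num, zpow_natCast]
          simp [pow_succ, Complex.I_mul_I]
        rw [v1]
        have : (1 - Complex.I * -Complex.I) = 0 := by
          simp [Complex.I_mul_I]
        rw [this]
        ring
  exact ⟨main, by simpa using main 1⟩
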